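/- Let γ : [0,∞) → ℝ be continuous and nonnegative, ℓ < 0, and let m^{Red} : [0,∞) → ℝ be the continuous solution of m^{Red}(t) = G(t) − ∫_0^t G(t−τ) m^{Red}(τ)dτ with G(t) = ℓ γ(t) e^{ℓ ∫_0^t γ}. Then m^{Red}(t)/ℓ ≥ 0 for all t ≥ 0. -/

import Mathlib

/-!
The kernel `G` is nonpositive on `[0, ∞)`, so the Volterra equation `m = G - G ⋆ m` has
nonpositive forcing and nonpositive kernel. Against such a kernel the positive part
`p = max m 0` satisfies `p t ≤ C ∫₀ᵗ p` on `[0, T]`, where `C` bounds `|G|` on `[0, T]`;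
Grönwall's inequality for the primitive of `p` forces `p = 0`, i.e. `m ≤ 0`, and `ℓ < 0`
turns this into `m / ℓ ≥ 0`.
-/

open Set intervalIntegral

theorem eq_zero_of_le_mul_integral {p : ℝ → ℝ} {C a b : ℝ} (hpc : Continuous p)
    (hp0 : ∀ t ∈ Icc a b, 0 ≤ p t) (hle : ∀ t ∈ Icc a b, p t ≤ C * ∫ τ in a..t, p τ) :
    ∀ t ∈ Icc a b, p t = 0 := by
  have hF0 : ∀ t ∈ Icc a b, 0 ≤ ∫ τ in a..t, p τ := fun t ht =>
    integral_nonneg ht.1 fun τ hτ => hp0 τ ⟨hτ.1, hτ.2.trans ht.2⟩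
  have hderiv (t : ℝ) : HasDerivAt (fun t => ∫ τ in a..t, p τ) (p t) t :=
    hpc.integral_hasStrictDerivAt a t |>.hasDerivAt
  have hF : ∀ t ∈ Icc a b, ∫ τ in a..t, p τ = 0 := by
    refine eq_zero_of_abs_deriv_le_mul_abs_self_of_eq_zero_right (K := C)
      (fun t _ => (hderiv t).continuousAt.continuousWithinAt)
      (fun t _ => (hderiv t).hasDerivWithinAt) integral_same fun t ht => ?_
    have ht' : t ∈ Icc a b := Ico_subset_Icc_self ht
    rw [Real.norm_of_nonneg (hp0 t ht'), Real.norm_of_nonneg (hF0 t ht')]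
    exact hle t ht'
  intro t ht
  refine le_antisymm ?_ (hp0 t ht)
  simpa [hF t ht] using hle t ht

theorem nonpos_of_eq_sub_volterra {f k m : ℝ → ℝ} (hkc : Continuous k) (hmc : Continuous m)
    (hf : ∀ t, 0 ≤ t → f t ≤ 0) (hk : ∀ t, 0 ≤ t → k t ≤ 0)
    (heq : ∀ t, 0 ≤ t → m t = f t - ∫ τ in (0:ℝ)..t, k (t - τ) * m τ) :
    ∀ t, 0 ≤ t → m t ≤ 0 := by
  intro T hT
  set p : ℝ → ℝ := fun t => max (m t) 0
  have hpc : Continuous p := hmc.max continuous_const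
  obtain ⟨C, hC⟩ := (isCompact_Icc (a := 0) (b := T)).exists_bound_of_continuousOn
    hkc.continuousOn
  have hkernel : ∀ t ∈ Icc 0 T, ∀ τ ∈ Icc 0 t, -(k (t - τ) * m τ) ≤ C * p τ := by
    rintro t ht τ ⟨hτ0, hτt⟩
    have hs : t - τ ∈ Icc 0 T := ⟨by linarith, by linarith [ht.2]⟩
    have hkC : -k (t - τ) ≤ C := (neg_le_abs _).trans (hC _ hs)
    have hmp : m τ ≤ p τ := le_max_left _ _
    have hp0 : 0 ≤ p τ := le_max_right _ _
    nlinarith [hk _ hs.1]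
  have hp : ∀ t ∈ Icc 0 T, p t ≤ C * ∫ τ in (0:ℝ)..t, p τ := by
    intro t ht
    have hconv : -∫ τ in (0:ℝ)..t, k (t - τ) * m τ ≤ C * ∫ τ in (0:ℝ)..t, p τ := by
      rw [← integral_neg, ← integral_const_mul]
      have hconvc : Continuous fun τ => -(k (t - τ) * m τ) := by fun_prop
      exact integral_mono_on ht.1 (hconvc.intervalIntegrable _ _)
        ((continuous_const.mul hpc).intervalIntegrable _ _) (hkernel t ht)
    have hint : 0 ≤ ∫ τ in (0:ℝ)..t, p τ := integral_nonneg ht.1 fun τ _ => le_max_right _ _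
    refine max_le ?_ (mul_nonneg ((abs_nonneg _).trans (hC 0 ⟨le_rfl, hT⟩)) hint)
    linarith [heq t ht.1, hf t ht.1]
  have hpT := eq_zero_of_le_mul_integral hpc (fun t _ => le_max_right _ _) hp T ⟨hT, le_rfl⟩
  exact (le_max_left _ _).trans hpT.le

theorem stmt18 (γ : ℝ → ℝ) (hγc : Continuous γ) (hγ : ∀ t, 0 ≤ t → 0 ≤ γ t)
    (ℓ : ℝ) (hℓ : ℓ < 0) (G mRed : ℝ → ℝ) (hmc : Continuous mRed)
    (hG : ∀ t, G t = ℓ * γ t * Real.exp (ℓ * ∫ τ in (0:ℝ)..t, γ τ))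
    (heq : ∀ t, 0 ≤ t → mRed t = G t - ∫ τ in (0:ℝ)..t, G (t - τ) * mRed τ) :
    ∀ t, 0 ≤ t → 0 ≤ mRed t / ℓ := by
  have hGc : Continuous G := by
    rw [funext hG]
    exact (continuous_const.mul hγc).mul (continuous_const.mul
      (continuous_primitive (fun a b => hγc.intervalIntegrable a b) 0)).rexp
  have hGnonpos : ∀ t, 0 ≤ t → G t ≤ 0 := fun t ht => by
    rw [hG]
    exact mul_nonpos_of_nonpos_of_nonneg (mul_nonpos_of_nonpos_of_nonneg hℓ.le (hγ t ht))
      (Real.exp_pos _).le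
  intro t ht
  exact div_nonneg_of_nonpos (nonpos_of_eq_sub_volterra hGc hmc hGnonpos hGnonpos heq t ht) hℓ.le
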